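/- arXiv:2211.06094 — 4 statements merged into one kernel-verified Lean document; each statement's English description precedes it below -/
import Mathlib

section
/- Let g be a standard Gaussian random vector in ℝⁿ with a = E‖g‖₂. Then n - a² ≤ 4, i.e. a² ≥ n - 4. -/
/-!
Write `Q = ‖g‖²`. Since the coordinates are independent with `E g_i² = 1` and `E g_i⁴ = 3`,
`E Q = n` and `Var Q = 2n`. Integrating the pointwise bound `3cq - q² ≤ 2c√c√q` (a quartic in `√q`
with a double root at `q = c`) at `c = E Q` gives `2(E Q)² - Var Q ≤ 2 E Q √(E Q) E √Q`,
i.e. `n - 1 ≤ √n a`, hence `a² ≥ n - 2 + 1/n`.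
-/

open MeasureTheory ProbabilityTheory Real Set
open scoped Nat

lemma integral_Ioi_even_pow_mul_exp_neg_half_sq (k : ℕ) :
    ∫ x in Ioi (0 : ℝ), x ^ (2 * k) * exp (-(1 / 2) * x ^ 2) =
      2 ^ k * √2 / 2 * Gamma (k + 1 / 2) := by
  have h := integral_rpow_mul_exp_neg_mul_rpow (p := 2) (q := 2 * k) (b := 1 / 2) two_pos
    (by linarith [(Nat.cast_nonneg k : (0 : ℝ) ≤ k)]) (by norm_num)
  calc ∫ x in Ioi (0 : ℝ), x ^ (2 * k) * exp (-(1 / 2) * x ^ 2)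
      = ∫ x in Ioi (0 : ℝ), x ^ (2 * k : ℝ) * exp (-(1 / 2) * x ^ (2 : ℝ)) := by
        refine setIntegral_congr_fun measurableSet_Ioi fun x _ => ?_
        norm_cast
    _ = _ := by
        rw [h, show (-(2 * k + 1) / 2 : ℝ) = -(k + 1 / 2) by ring,
          show ((2 * k + 1) / 2 : ℝ) = k + 1 / 2 by ring, one_div, inv_rpow zero_le_two,
          ← rpow_neg zero_le_two, neg_neg, rpow_add two_pos, rpow_natCast, ← one_div,
          ← sqrt_eq_rpow]
        ring

lemma integral_even_pow_gaussianReal (k : ℕ) :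
    ∫ x, x ^ (2 * k) ∂gaussianReal 0 1 = (2 * k - 1 : ℕ)‼ := by
  rw [integral_gaussianReal_eq_integral_smul one_ne_zero]
  calc ∫ x, gaussianPDFReal 0 1 x • x ^ (2 * k)
      = (√(2 * π))⁻¹ * ∫ x, |x| ^ (2 * k) * exp (-(1 / 2) * |x| ^ 2) := by
        rw [← integral_const_mul]
        congr with x
        simp only [gaussianPDFReal, NNReal.coe_one, mul_one, sub_zero, smul_eq_mul, pow_mul, sq_abs]
        ring_nf
    _ = (2 * k - 1 : ℕ)‼ := by
        rw [integral_comp_abs (f := fun x => x ^ (2 * k) * exp (-(1 / 2) * x ^ 2)),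
          integral_Ioi_even_pow_mul_exp_neg_half_sq, Gamma_nat_add_half, sqrt_mul zero_le_two]
        field_simp

lemma integral_sq_gaussianReal : ∫ x, x ^ 2 ∂gaussianReal 0 1 = 1 := by
  simpa using integral_even_pow_gaussianReal 1

lemma memLp_sq_gaussianReal : MemLp (fun x : ℝ => x ^ 2) 2 (gaussianReal 0 1) := by
  rw [memLp_two_iff_integrable_sq (by fun_prop)]
  simpa [← pow_mul, Even.pow_abs (by decide : Even 4)] using
    (memLp_id_gaussianReal 4).integrable_norm_pow four_ne_zero

lemma variance_sq_gaussianReal : Var[fun x : ℝ => x ^ 2; gaussianReal 0 1] = 2 := by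
  rw [variance_eq_sub memLp_sq_gaussianReal, integral_sq_gaussianReal]
  have h4 : ∫ x, x ^ 4 ∂gaussianReal 0 1 = 3 := by
    simpa [Nat.doubleFactorial] using integral_even_pow_gaussianReal 2
  simp only [Pi.pow_apply, ← pow_mul]
  norm_num [h4]

-- With `c = r²`, `q = s²`: `2r³s - 3r²s² + s⁴ = s (s - r)² (s + 2r)`.
lemma three_mul_mul_sub_sq_le {c q : ℝ} (hc : 0 ≤ c) (hq : 0 ≤ q) :
    3 * c * q - q ^ 2 ≤ 2 * c * √c * √q := by
  obtain ⟨r, hr, rfl⟩ : ∃ r, 0 ≤ r ∧ r ^ 2 = c := ⟨√c, sqrt_nonneg c, sq_sqrt hc⟩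
  obtain ⟨s, hs, rfl⟩ : ∃ s, 0 ≤ s ∧ s ^ 2 = q := ⟨√q, sqrt_nonneg q, sq_sqrt hq⟩
  rw [sqrt_sq hr, sqrt_sq hs]
  nlinarith [mul_nonneg (mul_nonneg hs (sq_nonneg (s - r))) (by positivity : 0 ≤ s + 2 * r)]

section Probability

variable {Ω ι : Type*} [MeasurableSpace Ω] [Fintype ι] {μ : Measure Ω} [IsProbabilityMeasure μ]
  {f : Ω → ℝ}

lemma integral_sum_comp_eval_pi (hf : Integrable f μ) :
    ∫ x, ∑ i, f (x i) ∂Measure.pi (fun _ : ι => μ) = Fintype.card ι * ∫ y, f y ∂μ := by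
  rw [integral_finsetSum _ fun i _ => integrable_comp_eval hf]
  simp [integral_comp_eval (μ := fun _ : ι => μ) hf.aestronglyMeasurable]

lemma memLp_sum_comp_eval_pi (hf : MemLp f 2 μ) :
    MemLp (fun x => ∑ i, f (x i)) 2 (Measure.pi fun _ : ι => μ) :=
  memLp_finsetSum _ fun i _ => hf.comp_measurePreserving (measurePreserving_eval _ i)

lemma variance_sum_comp_eval_pi (hf : MemLp f 2 μ) :
    Var[fun x => ∑ i, f (x i); Measure.pi fun _ : ι => μ] = Fintype.card ι * Var[f; μ] := by
  have h := variance_sum_pi (μ := fun _ : ι => μ) (X := fun _ => f) fun _ => hf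
  simpa [Finset.sum_fn] using h

lemma two_mul_sq_sub_variance_le {X : Ω → ℝ} (hX0 : 0 ≤ᵐ[μ] X) (hX : MemLp X 2 μ) :
    2 * μ[X] ^ 2 - Var[X; μ] ≤ 2 * μ[X] * √(μ[X]) * ∫ ω, √(X ω) ∂μ := by
  set m := μ[X]
  have hm : 0 ≤ m := integral_nonneg_of_ae hX0
  have hXint : Integrable X μ := hX.integrable one_le_two
  have hsqrt : Integrable (fun ω => √(X ω)) μ := by
    refine ((integrable_const 1).add hXint).mono' (by fun_prop) ?_
    filter_upwards [hX0] with ω (hω : 0 ≤ X ω)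
    rw [norm_of_nonneg (sqrt_nonneg _), Pi.add_apply]
    nlinarith [sq_sqrt hω, sqrt_nonneg (X ω)]
  have key : ∫ ω, (3 * m * X ω - X ω ^ 2) ∂μ ≤ ∫ ω, 2 * m * √m * √(X ω) ∂μ := by
    refine integral_mono_ae ((hXint.const_mul _).sub hX.integrable_sq) (hsqrt.const_mul _) ?_
    filter_upwards [hX0] with ω (hω : 0 ≤ X ω)
    exact three_mul_mul_sub_sq_le hm hω
  rw [integral_sub (hXint.const_mul _) hX.integrable_sq, integral_const_mul,
    integral_const_mul] at key
  rw [variance_eq_sub hX]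
  simp only [Pi.pow_apply]
  linarith

end Probability

theorem gaussian_norm_mean_sq (n : ℕ) (hn : 0 < n)
    (a : ℝ)
    (ha : a = ∫ x, Real.sqrt (∑ i, (x i) ^ 2)
        ∂(Measure.pi fun _ : Fin n => gaussianReal 0 1)) :
    (n : ℝ) - a ^ 2 ≤ 4 := by
  have hmean : ∫ x, ∑ i, x i ^ 2 ∂(Measure.pi fun _ : Fin n => gaussianReal 0 1) = n := by
    rw [integral_sum_comp_eval_pi (memLp_sq_gaussianReal.integrable one_le_two),
      integral_sq_gaussianReal, Fintype.card_fin, mul_one]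
  have hvar :
      Var[fun x => ∑ i, x i ^ 2; Measure.pi fun _ : Fin n => gaussianReal 0 1] = 2 * n := by
    rw [variance_sum_comp_eval_pi memLp_sq_gaussianReal, variance_sq_gaussianReal,
      Fintype.card_fin, mul_comm]
  have key := two_mul_sq_sub_variance_le
    (ae_of_all _ fun x : Fin n → ℝ => Finset.sum_nonneg fun i _ => sq_nonneg (x i))
    (memLp_sum_comp_eval_pi memLp_sq_gaussianReal)
  rw [hmean, hvar, ← ha] at key
  have hn' : (1 : ℝ) ≤ n := by exact_mod_cast hn
  have hsqrt : √(n : ℝ) ^ 2 = n := sq_sqrt (Nat.cast_nonneg n)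
  have hlin : (n : ℝ) - 1 ≤ √n * a := by nlinarith [sqrt_nonneg (n : ℝ)]
  nlinarith [sqrt_nonneg (n : ℝ)]
end

section
/- Let K ⊂ ℝⁿ be centrally symmetric convex with B₂ⁿ ⊂ K ⊂ √n B₂ⁿ, and let P, Q be rank-k orthogonal projections with ‖P-Q‖ ≤ 1/(2√n). Then PK ⊂ 2·PQK, i.e. for every x ∈ ℝⁿ the support functions satisfy h_{PK}(x) ≤ 2 h_{PQK}(x). -/
/-!
Since `P` is idempotent, `P = P Q + P (P - Q)`, so `P x = P Q x + ½ P (2 (P - Q) x)`, and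
`2 (P - Q)` maps `K ⊆ √n B` into `B ⊆ K`. Hence `P K ⊆ P Q K + ½ P K`. For a bounded set `S` and a
closed convex set `C`, the inclusion `S ⊆ C + ½ S` forces `S ⊆ 2 C`: writing `s = midpoint (2c) s'`,
convexity of `2 C` halves the distance from `S` to `2 C` at each step.
-/

open MeasureTheory Module Pointwise Metric

section

variable {E : Type*} [NormedAddCommGroup E] [NormedSpace ℝ E]

theorem Metric.infDist_midpoint_le {D : Set E} (hD : Convex ℝ D) {d : E} (hd : d ∈ D) (x : E) :
    infDist (midpoint ℝ d x) D ≤ infDist x D / 2 := by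
  rw [le_div_iff₀ two_pos, le_infDist ⟨d, hd⟩]
  intro d' hd'
  have hmid : dist (midpoint ℝ d x) (midpoint ℝ d d') ≤ dist x d' / 2 := by
    simpa using dist_midpoint_midpoint_le' (𝕜 := ℝ) d x d d'
  linarith [infDist_le_dist_of_mem (x := midpoint ℝ d x) (hD.midpoint_mem hd hd')]

theorem subset_of_forall_eq_midpoint {S D : Set E} (hD : Convex ℝ D) (hDc : IsClosed D)
    (hS : Bornology.IsBounded S) (h : ∀ s ∈ S, ∃ d ∈ D, ∃ s' ∈ S, s = midpoint ℝ d s') :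
    S ⊆ D := by
  intro s hs
  obtain ⟨d₀, hd₀, -⟩ := h s hs
  obtain ⟨r, hr⟩ := hS.subset_closedBall d₀
  have hdist : ∀ N : ℕ, ∀ s ∈ S, infDist s D ≤ r * (2⁻¹ : ℝ) ^ N := by
    intro N
    induction N with
    | zero =>
      intro s hs
      simpa using (infDist_le_dist_of_mem hd₀).trans (mem_closedBall.1 (hr hs))
    | succ N ih =>
      intro s hs
      obtain ⟨d, hd, s', hs', rfl⟩ := h s hs
      calc infDist (midpoint ℝ d s') D ≤ infDist s' D / 2 := infDist_midpoint_le hD hd s'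
        _ ≤ r * (2⁻¹ : ℝ) ^ N / 2 := by gcongr; exact ih s' hs'
        _ = r * (2⁻¹ : ℝ) ^ (N + 1) := by ring
  have hlim : Filter.Tendsto (fun N : ℕ => r * (2⁻¹ : ℝ) ^ N) Filter.atTop (nhds 0) := by
    simpa using (tendsto_pow_atTop_nhds_zero_of_lt_one (by norm_num : (0 : ℝ) ≤ 2⁻¹)
      (by norm_num)).const_mul r
  rw [hDc.mem_iff_infDist_zero ⟨d₀, hd₀⟩]
  exact le_antisymm (ge_of_tendsto' hlim fun N => hdist N s hs) infDist_nonneg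

theorem subset_two_smul_of_subset_add_half_smul {S C : Set E} (hC : Convex ℝ C)
    (hCc : IsClosed C) (hS : Bornology.IsBounded S) (h : S ⊆ C + (2⁻¹ : ℝ) • S) :
    S ⊆ (2 : ℝ) • C := by
  refine subset_of_forall_eq_midpoint (hC.smul 2) (hCc.smul_of_ne_zero two_ne_zero) hS ?_
  intro s hs
  obtain ⟨c, hc, _, ⟨s', hs', rfl⟩, rfl⟩ := h hs
  refine ⟨(2 : ℝ) • c, Set.smul_mem_smul_set hc, s', hs', ?_⟩
  rw [midpoint_eq_smul_add, smul_add, smul_smul]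
  norm_num

theorem Set.MapsTo.of_opNorm_mul_le_one {K : Set E} {r : ℝ} (hball : closedBall (0 : E) 1 ⊆ K)
    (hK : K ⊆ closedBall 0 r) {A : E →L[ℝ] E} (hA : ‖A‖ * r ≤ 1) : Set.MapsTo A K K := by
  intro x hx
  apply hball
  rw [mem_closedBall_zero_iff]
  exact (A.le_opNorm_of_le (mem_closedBall_zero_iff.1 (hK hx))).trans hA

theorem apply_eq_comp_apply_add_half_smul {P : E →L[ℝ] E} (hP : P ∘L P = P) (Q : E →L[ℝ] E)
    (x : E) : P x = (P ∘L Q) x + (2⁻¹ : ℝ) • P ((2 : ℝ) • (P - Q) x) := by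
  have hPP : P (P x) = P x := congr($hP x)
  simp only [ContinuousLinearMap.comp_apply, sub_apply, map_smul, map_sub,
    hPP, smul_smul]
  norm_num

theorem image_subset_image_comp_add_half_smul {K : Set E} {P Q : E →L[ℝ] E} (hP : P ∘L P = P)
    (hK : Set.MapsTo ((2 : ℝ) • (P - Q)) K K) :
    P '' K ⊆ (P ∘L Q) '' K + (2⁻¹ : ℝ) • P '' K := by
  rintro _ ⟨x, hx, rfl⟩
  rw [apply_eq_comp_apply_add_half_smul hP Q x]
  exact Set.add_mem_add (Set.mem_image_of_mem _ hx)
    (Set.smul_mem_smul_set (Set.mem_image_of_mem _ (hK hx)))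

end

theorem proj_subset_two_smul_general (n : ℕ)
    (K : Set (EuclideanSpace ℝ (Fin n)))
    (hKconv : Convex ℝ K) (hKcomp : IsCompact K)
    (hKJohn₁ : Metric.closedBall (0 : EuclideanSpace ℝ (Fin n)) 1 ⊆ K)
    (hKJohn₂ : K ⊆ Metric.closedBall (0 : EuclideanSpace ℝ (Fin n)) (Real.sqrt n))
    (P Q : EuclideanSpace ℝ (Fin n) →L[ℝ] EuclideanSpace ℝ (Fin n))
    (hPproj : P ∘L P = P)
    (hPQ : ‖P - Q‖ ≤ 1 / (2 * Real.sqrt n)) :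
    P '' K ⊆ ((2 : ℝ) • ((P ∘L Q) '' K) : Set (EuclideanSpace ℝ (Fin n))) := by
  have hnorm : ‖(2 : ℝ) • (P - Q)‖ * Real.sqrt n ≤ 1 := by
    rw [norm_smul, Real.norm_two]
    calc 2 * ‖P - Q‖ * Real.sqrt n ≤ 2 * (1 / (2 * Real.sqrt n)) * Real.sqrt n := by gcongr
      _ = (2 * Real.sqrt n) * (2 * Real.sqrt n)⁻¹ := by ring
      _ ≤ 1 := mul_inv_le_one
  have hmaps := Set.MapsTo.of_opNorm_mul_le_one hKJohn₁ hKJohn₂ hnorm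
  exact subset_two_smul_of_subset_add_half_smul (hKconv.linear_image (P ∘L Q).toLinearMap)
    (hKcomp.image (P ∘L Q).continuous).isClosed (hKcomp.image P.continuous).isBounded
    (image_subset_image_comp_add_half_smul hPproj hmaps)

theorem proj_subset_two_smul (n k : ℕ) (hk : 1 ≤ k) (hkn : k ≤ n)
    (K : Set (EuclideanSpace ℝ (Fin n)))
    (hKconv : Convex ℝ K) (hKcomp : IsCompact K) (hKint : (interior K).Nonempty)
    (hKsym : K = -K)
    (hKJohn₁ : Metric.closedBall (0 : EuclideanSpace ℝ (Fin n)) 1 ⊆ K)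
    (hKJohn₂ : K ⊆ Metric.closedBall (0 : EuclideanSpace ℝ (Fin n)) (Real.sqrt n))
    (P Q : EuclideanSpace ℝ (Fin n) →L[ℝ] EuclideanSpace ℝ (Fin n))
    (hPproj : P ∘L P = P) (hQproj : Q ∘L Q = Q)
    (hPsa : ∀ x y, (inner ℝ (P x) y : ℝ) = inner ℝ x (P y))
    (hQsa : ∀ x y, (inner ℝ (Q x) y : ℝ) = inner ℝ x (Q y))
    (hPrank : finrank ℝ (LinearMap.range (P : EuclideanSpace ℝ (Fin n) →ₗ[ℝ]
        EuclideanSpace ℝ (Fin n))) = k)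
    (hQrank : finrank ℝ (LinearMap.range (Q : EuclideanSpace ℝ (Fin n) →ₗ[ℝ]
        EuclideanSpace ℝ (Fin n))) = k)
    (hPQ : ‖P - Q‖ ≤ 1 / (2 * Real.sqrt n)) :
    P '' K ⊆ ((2 : ℝ) • ((P ∘L Q) '' K) : Set (EuclideanSpace ℝ (Fin n))) :=
  proj_subset_two_smul_general n K hKconv hKcomp hKJohn₁ hKJohn₂ P Q hPproj hPQ
end

section
/- Let w₁,…,w_N ∈ ℝⁿ with ‖wᵢ‖₂ ≤ 1 for all i and N ≥ n. Then |absconv{w₁,…,w_N}|^{1/n} ≤ C √(log(2N/n)) / n for some absolute constant C > 0. -/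
/-!
Maurey's empirical method. If `x = ∑ λᵢ uᵢ` is a convex combination of vectors of norm at most
one, then for every `v` some `i` satisfies `‖v + (x - uᵢ)‖² ≤ ‖v‖² + 1` (on average the cross
term vanishes), so greedily chosen `u_{i₁}, …, u_{i_k}` keep `‖k x - ∑ u_{iⱼ}‖² ≤ k`. The averages
`k⁻¹ ∑ u_{iⱼ}` depend only on a multiset, hence `multichoose m k` balls of radius `1/√k` cover the
hull of `m` points. A Chernoff bound against a Gaussian gives `|B(r)| ≤ (r √(2πe/n))ⁿ` in
dimension `n`. With `L = log (m/n)` and `k = ⌈n/L⌉` the number of balls is at most `e^{6n}` and each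
has volume at most `(√(2πe) √L / n)ⁿ`; when `n ≤ 4L` the unit ball already suffices.
-/

open MeasureTheory Real Pointwise Set Module Metric GaussianFourier
open scoped Nat

section Gaussian

variable {E : Type*} [NormedAddCommGroup E] [InnerProductSpace ℝ E] [FiniteDimensional ℝ E]
  [MeasurableSpace E] [BorelSpace E]

theorem volume_closedBall_le (x : E) {r : ℝ} (hr : 0 < r) (hE : 0 < finrank ℝ E) :
    volume (closedBall x r) ≤
      ENNReal.ofReal ((r * √(2 * π * exp 1 / finrank ℝ E)) ^ finrank ℝ E) := by
  set n := finrank ℝ E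
  have hn : (0 : ℝ) < n := by exact_mod_cast hE
  -- `b = n / (2 r²)` minimises `exp (b r²) (π / b) ^ (n / 2)`.
  set b : ℝ := n / (2 * r ^ 2)
  have hb : 0 < b := by positivity
  set g : E → ℝ := fun y ↦ exp (b * r ^ 2) * exp (-b * ‖y‖ ^ 2)
  have hgauss : ∫ y : E, exp (-b * ‖y‖ ^ 2) = (π / b) ^ (n / 2 : ℝ) :=
    integral_rexp_neg_mul_sq_norm hb
  have hg : Integrable g :=
    (Integrable.of_integral_ne_zero (by rw [hgauss]; positivity)).const_mul _
  have hg_ge : (closedBall (0 : E) r).indicator 1 ≤ fun y ↦ ENNReal.ofReal (g y) := by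
    intro y
    by_cases hy : y ∈ closedBall (0 : E) r
    · have hyr : ‖y‖ ^ 2 ≤ r ^ 2 := by
        rw [mem_closedBall_zero_iff] at hy
        exact pow_le_pow_left₀ (norm_nonneg y) hy 2
      simp only [indicator_of_mem hy, Pi.one_apply, ENNReal.one_le_ofReal, g, ← exp_add]
      exact one_le_exp (by nlinarith)
    · simp [indicator_of_notMem hy]
  have hint : ∫ y, g y = (r * √(2 * π * exp 1 / n)) ^ n := by
    have hπb : π / b * exp 1 = (r * √(2 * π * exp 1 / n)) ^ 2 := by
      rw [mul_pow, sq_sqrt (by positivity)]; simp only [b]; field_simp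
    rw [integral_const_mul, hgauss, ← exp_one_rpow,
      show b * r ^ 2 = n / 2 by simp only [b]; field_simp, mul_comm,
      ← mul_rpow (by positivity) (by positivity), hπb, ← rpow_natCast _ 2,
      ← rpow_mul (by positivity), ← rpow_natCast]
    ring_nf
  calc volume (closedBall x r) = volume (closedBall (0 : E) r) := by
        rw [Measure.addHaar_closedBall_center]
    _ = ∫⁻ y, (closedBall (0 : E) r).indicator 1 y := by
        rw [lintegral_indicator_one measurableSet_closedBall]
    _ ≤ ∫⁻ y, ENNReal.ofReal (g y) := lintegral_mono hg_ge
    _ = _ := by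
        rw [← ofReal_integral_eq_lintegral_ofReal hg (ae_of_all _ fun y ↦ by positivity), hint]

end Gaussian

section Maurey

variable {F : Type*} [NormedAddCommGroup F] [InnerProductSpace ℝ F]

theorem exists_mem_norm_add_sub_sq_le {s : Set F} (hs : ∀ y ∈ s, ‖y‖ ≤ 1) {x : F}
    (hx : x ∈ convexHull ℝ s) (v : F) : ∃ y ∈ s, ‖v + (x - y)‖ ^ 2 ≤ ‖v‖ ^ 2 + 1 := by
  obtain ⟨y, hys, hxy⟩ := ((innerₛₗ ℝ (v + x)).convexOn convex_univ).exists_ge_of_mem_convexHull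
    (subset_univ s) hx
  refine ⟨y, hys, ?_⟩
  have hy : ‖y‖ ^ 2 ≤ 1 := pow_le_one₀ (norm_nonneg y) (hs y hys)
  simp only [innerₛₗ_apply_apply] at hxy
  rw [← add_sub_assoc, norm_sub_sq_real, norm_add_sq_real] at *
  rw [inner_add_left, real_inner_self_eq_norm_sq] at hxy
  nlinarith [sq_nonneg ‖x‖]

theorem exists_norm_smul_sub_sum_sq_le {ι : Type*} (u : ι → F) (hu : ∀ i, ‖u i‖ ≤ 1) {x : F}
    (hx : x ∈ convexHull ℝ (range u)) (k : ℕ) :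
    ∃ f : Fin k → ι, ‖(k : ℝ) • x - ∑ j, u (f j)‖ ^ 2 ≤ k := by
  induction k with
  | zero => exact ⟨Fin.elim0, by simp⟩
  | succ k ih =>
    obtain ⟨f, hf⟩ := ih
    obtain ⟨_, ⟨i, rfl⟩, hi⟩ :=
      exists_mem_norm_add_sub_sq_le (forall_mem_range.2 hu) hx ((k : ℝ) • x - ∑ j, u (f j))
    refine ⟨Fin.cons i f, ?_⟩
    have hstep : ((k + 1 : ℕ) : ℝ) • x - ∑ j, u ((Fin.cons i f : Fin (k + 1) → ι) j)
        = ((k : ℝ) • x - ∑ j, u (f j)) + (x - u i) := by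
      rw [Fin.sum_univ_succ]; simp only [Fin.cons_zero, Fin.cons_succ]; push_cast; module
    rw [hstep]; push_cast; linarith

theorem convexHull_range_subset_iUnion_closedBall {ι : Type*} (u : ι → F) (hu : ∀ i, ‖u i‖ ≤ 1)
    {k : ℕ} (hk : 0 < k) :
    convexHull ℝ (range u) ⊆
      ⋃ c : Sym ι k, closedBall ((k : ℝ)⁻¹ • (c.1.map u).sum) (√k)⁻¹ := by
  intro x hx
  obtain ⟨f, hf⟩ := exists_norm_smul_sub_sum_sq_le u hu hx k
  refine mem_iUnion.2 ⟨⟨Finset.univ.val.map f, by simp⟩, ?_⟩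
  have hk' : (0 : ℝ) < k := by exact_mod_cast hk
  have hsum : ((Finset.univ.val.map f).map u).sum = ∑ j, u (f j) := by
    rw [Multiset.map_map]; rfl
  rw [mem_closedBall, dist_eq_norm, hsum]
  calc ‖x - (k : ℝ)⁻¹ • ∑ j, u (f j)‖ = (k : ℝ)⁻¹ * ‖(k : ℝ) • x - ∑ j, u (f j)‖ := by
        rw [← norm_smul_of_nonneg (by positivity), smul_sub, inv_smul_smul₀ hk'.ne']
    _ ≤ (k : ℝ)⁻¹ * √k := by
        gcongr; exact (le_sqrt (norm_nonneg _) hk'.le).2 hf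
    _ = (√k)⁻¹ := by
        rw [inv_mul_eq_div, sqrt_div_self', one_div]

end Maurey

theorem sqrt_div_le_of_le_four_mul {c n L : ℝ} (hn : 0 < n) (h : n ≤ 4 * L) :
    √(c / n) ≤ exp 6 * √c * √L / n := by
  have hnn : √n * √n = n := mul_self_sqrt hn.le
  have h1 : √n ≤ 2 * √L := by
    rw [sqrt_le_iff, mul_pow, sq_sqrt (by linarith)]; constructor <;> [positivity; linarith]
  have h2 : √n ≤ exp 6 * √L := h1.trans (by gcongr; linarith [add_one_le_exp 6])
  rw [sqrt_div' _ hn.le, div_le_div_iff₀ (sqrt_pos.2 hn) hn]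
  calc √c * n = √c * √n * √n := by linear_combination -√c * hnn
    _ ≤ √c * (exp 6 * √L) * √n := by gcongr
    _ = _ := by ring

theorem inv_sqrt_mul_sqrt_div_le {c n L k : ℝ} (hn : 0 < n) (hL : 0 < L) (hk : n / L ≤ k) :
    (√k)⁻¹ * √(c / n) ≤ √c * √L / n := by
  have hkL : (√k)⁻¹ ≤ √L / √n := by
    rw [← sqrt_inv, ← sqrt_div' _ hn.le]
    exact sqrt_le_sqrt (by simpa using inv_anti₀ (by positivity) hk)
  calc (√k)⁻¹ * √(c / n) ≤ √L / √n * (√c / √n) := by rw [sqrt_div' _ hn.le]; gcongr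
    _ = _ := by rw [div_mul_div_comm, mul_self_sqrt hn.le, mul_comm]

theorem Nat.multichoose_le_exp_one_mul_pow (m : ℕ) {k : ℕ} (hk : 0 < k) :
    (m.multichoose k : ℝ) ≤ (exp 1 * (m / k + 1)) ^ k := by
  have hk' : (0 : ℝ) < k := by exact_mod_cast hk
  rw [Nat.multichoose_eq]
  calc ((m + k - 1).choose k : ℝ) ≤ ((m + k - 1 : ℕ) : ℝ) ^ k / k ! := Nat.choose_le_pow_div k _
    _ ≤ ((m : ℝ) + k) ^ k / k ! := by
        gcongr; exact_mod_cast (Nat.sub_le _ _)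
    _ = (m / k + 1) ^ k * ((k : ℝ) ^ k / k !) := by
        rw [mul_div_assoc', ← mul_pow, div_add_one hk'.ne', div_mul_cancel₀ _ hk'.ne']
    _ ≤ (m / k + 1) ^ k * exp k := by gcongr; exact pow_div_factorial_le_exp (k : ℝ) hk'.le k
    _ = _ := by rw [mul_pow, ← exp_one_pow, mul_comm]

theorem multichoose_le_exp_six_mul {m n k : ℕ} (hn : 0 < n) (hm : 2 * n ≤ m)
    (hL : 1 / 2 < log (m / n)) (hLn : 4 * log (m / n) < n)
    (hk_ge : n / log (m / n) ≤ k) (hk_le : k ≤ n / log (m / n) + 1) :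
    (m.multichoose k : ℝ) ≤ exp (6 * n) := by
  set L := log (m / n)
  have hn' : (0 : ℝ) < n := by exact_mod_cast hn
  have hL0 : 0 < L := by linarith
  have hk : (0 : ℝ) < k := (div_pos hn' hL0).trans_le hk_ge
  have hX : exp L = m / n := exp_log (div_pos (by exact_mod_cast hn.trans_le (by omega)) hn')
  have hX1 : 1 ≤ exp L := one_le_exp hL0.le
  have hmk : m / k + 1 ≤ exp (2 * L) := by
    have h1 : (m : ℝ) / k ≤ exp L * L := by
      have hnk : (n : ℝ) / k ≤ L := by
        rw [div_le_iff₀ hk, mul_comm]; rwa [div_le_iff₀ hL0] at hk_ge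
      calc (m : ℝ) / k = m / n * (n / k) := by field_simp
        _ ≤ exp L * L := by rw [hX]; gcongr
    have h2 : L + 1 ≤ exp L := by linarith [add_one_le_exp L]
    rw [two_mul, exp_add]
    nlinarith
  have hkL : k * (1 + 2 * L) ≤ 6 * n := by
    have h1 : n / L ≤ 2 * n := by rw [div_le_iff₀ hL0]; nlinarith
    have h2 : (1 : ℝ) ≤ n := by exact_mod_cast hn
    calc k * (1 + 2 * L) ≤ (n / L + 1) * (1 + 2 * L) := by gcongr
      _ = n / L + 2 * n + 1 + 2 * L := by field_simp; ring
      _ ≤ 6 * n := by linarith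
  calc (m.multichoose k : ℝ) ≤ (exp 1 * (m / k + 1)) ^ k :=
        Nat.multichoose_le_exp_one_mul_pow m (by exact_mod_cast hk)
    _ ≤ (exp 1 * exp (2 * L)) ^ k := by gcongr
    _ = exp (k * (1 + 2 * L)) := by rw [← exp_add, ← exp_nat_mul]
    _ ≤ exp (6 * n) := exp_le_exp.2 hkL

section Volume

variable {E : Type*} [NormedAddCommGroup E] [InnerProductSpace ℝ E] [FiniteDimensional ℝ E]
  [MeasurableSpace E] [BorelSpace E] {ι : Type*} [Fintype ι]

theorem volume_convexHull_range_le_multichoose_mul (u : ι → E) (hu : ∀ i, ‖u i‖ ≤ 1) {k : ℕ}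
    (hk : 0 < k) (hE : 0 < finrank ℝ E) :
    volume (convexHull ℝ (range u)) ≤ (Fintype.card ι).multichoose k *
      ENNReal.ofReal (((√k)⁻¹ * √(2 * π * exp 1 / finrank ℝ E)) ^ finrank ℝ E) := by
  classical
  calc volume (convexHull ℝ (range u))
      ≤ volume (⋃ c : Sym ι k, closedBall ((k : ℝ)⁻¹ • (c.1.map u).sum) (√k)⁻¹) :=
        measure_mono (convexHull_range_subset_iUnion_closedBall u hu hk)
    _ ≤ ∑ c : Sym ι k, volume (closedBall ((k : ℝ)⁻¹ • (c.1.map u).sum) (√k)⁻¹) :=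
        measure_iUnion_fintype_le _ _
    _ ≤ ∑ _c : Sym ι k,
          ENNReal.ofReal (((√k)⁻¹ * √(2 * π * exp 1 / finrank ℝ E)) ^ finrank ℝ E) :=
        Finset.sum_le_sum fun c _ ↦ volume_closedBall_le _ (by positivity) hE
    _ = _ := by rw [Finset.sum_const, Finset.card_univ, Sym.card_sym_eq_multichoose, nsmul_eq_mul]

theorem volume_convexHull_range_le_log (u : ι → E) (hu : ∀ i, ‖u i‖ ≤ 1)
    (hE : 0 < finrank ℝ E) (hm : 2 * finrank ℝ E ≤ Fintype.card ι) :
    volume (convexHull ℝ (range u)) ≤ ENNReal.ofReal ((exp 6 * √(2 * π * exp 1) *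
      √(log (Fintype.card ι / finrank ℝ E)) / finrank ℝ E) ^ finrank ℝ E) := by
  set n := finrank ℝ E
  set m := Fintype.card ι
  set L := log (m / n)
  have hn : (0 : ℝ) < n := by exact_mod_cast hE
  have hL : 1 / 2 < L := by
    refine lt_of_lt_of_le (by linarith [log_two_gt_d9]) (log_le_log two_pos ?_)
    rw [le_div_iff₀ hn]; exact_mod_cast hm
  rcases le_or_gt (n : ℝ) (4 * L) with hsmall | hlarge
  · have hsub : convexHull ℝ (range u) ⊆ closedBall 0 1 :=
      convexHull_min (range_subset_iff.2 fun i ↦ mem_closedBall_zero_iff.2 (hu i))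
        (convex_closedBall 0 1)
    refine (measure_mono hsub).trans ((volume_closedBall_le 0 one_pos hE).trans
      (ENNReal.ofReal_le_ofReal (pow_le_pow_left₀ (by positivity) ?_ n)))
    simpa using sqrt_div_le_of_le_four_mul hn hsmall
  · set k := ⌈n / L⌉₊
    have hk : 0 < k := Nat.ceil_pos.2 (by positivity)
    have hM := multichoose_le_exp_six_mul hE hm hL hlarge (Nat.le_ceil _)
      (Nat.ceil_lt_add_one (by positivity)).le
    have hr :=
      inv_sqrt_mul_sqrt_div_le (c := 2 * π * exp 1) hn (by linarith) (Nat.le_ceil (n / L))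
    calc volume (convexHull ℝ (range u))
        ≤ m.multichoose k * ENNReal.ofReal (((√k)⁻¹ * √(2 * π * exp 1 / n)) ^ n) :=
          volume_convexHull_range_le_multichoose_mul u hu hk hE
      _ ≤ ENNReal.ofReal (exp (6 * n)) * ENNReal.ofReal ((√(2 * π * exp 1) * √L / n) ^ n) := by
          rw [← ENNReal.ofReal_natCast]
          gcongr
      _ = _ := by
          rw [← ENNReal.ofReal_mul (exp_pos _).le, show exp (6 * n) = exp 6 ^ n by
            rw [← exp_nat_mul, mul_comm], ← mul_pow, mul_div_assoc, mul_div_assoc, mul_assoc]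
          congr 2; ring

end Volume

theorem absconv_volume_bound_log :
    ∃ C : ℝ, 0 < C ∧ ∀ (n N : ℕ), 0 < n → n ≤ N →
      ∀ w : Fin N → (Fin n → ℝ), (∀ i, Real.sqrt (∑ j, (w i j) ^ 2) ≤ 1) →
        (volume (convexHull ℝ (Set.range w ∪ -Set.range w))) ^ ((1 : ℝ) / n) ≤
          ENNReal.ofReal (C * Real.sqrt (Real.log (2 * N / n)) / n) := by
  refine ⟨exp 6 * √(2 * π * exp 1), by positivity, fun n N hn hnN w hw ↦ ?_⟩
  set v : Fin N → EuclideanSpace ℝ (Fin n) := fun i ↦ WithLp.toLp 2 (w i)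
  set u : Fin N ⊕ Fin N → EuclideanSpace ℝ (Fin n) := Sum.elim v (-v)
  have hv : ∀ i, ‖v i‖ ≤ 1 := fun i ↦ by simpa [v, EuclideanSpace.norm_eq] using hw i
  have hu : ∀ i, ‖u i‖ ≤ 1 := by rintro (i | i) <;> simp [u, hv]
  have hsub : convexHull ℝ (range w ∪ -range w) ⊆ WithLp.toLp 2 ⁻¹' convexHull ℝ (range u) := by
    refine convexHull_min ?_ ((convex_convexHull ℝ _).linear_preimage
      (WithLp.linearEquiv 2 ℝ (Fin n → ℝ)).symm.toLinearMap)
    rintro _ (⟨i, rfl⟩ | ⟨i, hi⟩)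
    · exact subset_convexHull ℝ _ ⟨.inl i, rfl⟩
    · refine subset_convexHull ℝ _ ⟨.inr i, ?_⟩
      simp [u, v, ← neg_eq_iff_eq_neg.2 hi]
  have hvol := volume_convexHull_range_le_log u hu (by simpa using hn)
    (by simp only [finrank_euclideanSpace_fin, Fintype.card_sum, Fintype.card_fin]; omega)
  rw [one_div, ENNReal.rpow_inv_le_iff (by positivity),
    ENNReal.ofReal_rpow_of_nonneg (by positivity) (by positivity), rpow_natCast]
  calc volume (convexHull ℝ (range w ∪ -range w))
      ≤ volume (WithLp.toLp 2 ⁻¹' convexHull ℝ (range u)) := measure_mono hsub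
    _ = volume (convexHull ℝ (range u)) :=
        (PiLp.volume_preserving_toLp (Fin n)).measure_preimage
          ((finite_range u).isCompact_convexHull ℝ).measurableSet.nullMeasurableSet
    _ ≤ _ := by simpa [two_mul] using hvol
end

section
/- Let Q₀, Q₁ be rank-k orthogonal projections on ℝⁿ, K ⊂ ℝⁿ a centrally symmetric convex body, A > 0, and T₀ : Q₀ℝⁿ → Q₁ℝⁿ a fixed volume-preserving linear map. Let Z_N(ω) = absconv{√n e₁,…,√n eₙ, g₁(ω),…,g_N(ω)} with g₁,…,g_N independent standard Gaussians. Then P( ‖T₀ : X_{Q₀Z_N(ω)} → X_{Q₁K}‖ ≤ A ) ≤ (A/√(2π))^{kN} |Q₁K|^N. -/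
/-!
Write `V₀` for the range of `Q₀`. For a single Gaussian vector `g`, the event `T₀ (Q₀ g) ∈ A • Q₁K`
says that `Q₀ g` lies in `S = V₀ ∩ T₀⁻¹(A • Q₁K)`. The image of the standard Gaussian under the
orthogonal projection onto `V₀` is the standard Gaussian of `V₀` (compare characteristic
functions), whose density is at most `(2π)^(-k/2)`, and Lebesgue measure on `V₀` is dominated by
`μH[k]`. Since `T₀` preserves `μH[k]` on `V₀`, `μH[k] S ≤ μH[k] (A • Q₁K) = A^k μH[k] (Q₁K)`.
The event for the polytope forces this for each of the `N` independent vertices `gᵢ`.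
-/

open MeasureTheory ProbabilityTheory Module Pointwise
open scoped ENNReal NNReal Real

theorem MeasureTheory.Measure.pi_fin_mono {m : ℕ} {α : Fin m → Type*}
    [∀ i, MeasurableSpace (α i)] {μ ν : ∀ i, Measure (α i)}
    [∀ i, SigmaFinite (μ i)] [∀ i, SigmaFinite (ν i)] (h : ∀ i, μ i ≤ ν i) :
    Measure.pi μ ≤ Measure.pi ν := by
  induction m with
  | zero => rw [Measure.pi_of_empty μ, Measure.pi_of_empty ν]
  | succ m ih =>
    rw [← (measurePreserving_piFinSuccAbove μ 0).symm.map_eq,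
      ← (measurePreserving_piFinSuccAbove ν 0).symm.map_eq]
    exact Measure.map_mono (Measure.prod_mono (h 0) (ih fun i => h _))
      (MeasurableEquiv.measurable _)

theorem MeasureTheory.Measure.pi_mono {ι : Type*} [Fintype ι] {α : ι → Type*}
    [∀ i, MeasurableSpace (α i)] {μ ν : ∀ i, Measure (α i)}
    [∀ i, SigmaFinite (μ i)] [∀ i, SigmaFinite (ν i)] (h : ∀ i, μ i ≤ ν i) :
    Measure.pi μ ≤ Measure.pi ν := by
  set e := (Fintype.equivFin ι).symm
  rw [← (measurePreserving_piCongrLeft μ e).map_eq, ← (measurePreserving_piCongrLeft ν e).map_eq]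
  exact Measure.map_mono (Measure.pi_fin_mono fun i => h (e i)) (MeasurableEquiv.measurable _)

theorem MeasureTheory.Measure.pi_smul_const {ι : Type*} [Fintype ι] {α : ι → Type*}
    [∀ i, MeasurableSpace (α i)] (μ : ∀ i, Measure (α i)) [∀ i, SigmaFinite (μ i)] (c : ℝ≥0) :
    Measure.pi (fun i => c • μ i) = c ^ Fintype.card ι • Measure.pi μ := by
  refine Measure.pi_eq fun s _ => ?_
  simp only [Measure.smul_apply, Measure.pi_pi, ENNReal.smul_def, smul_eq_mul,
    Finset.prod_mul_distrib, Finset.prod_const, Finset.card_univ, ENNReal.coe_pow]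

theorem gaussianReal_le_smul_volume :
    gaussianReal 0 1 ≤ (√(2 * π))⁻¹.toNNReal • volume := by
  rw [gaussianReal_of_var_ne_zero 0 one_ne_zero, ENNReal.smul_def, ← withDensity_const]
  refine withDensity_mono (Filter.Eventually.of_forall fun x => ENNReal.ofReal_le_ofReal ?_)
  simp only [gaussianPDFReal, NNReal.coe_one, mul_one, sub_zero]
  exact mul_le_of_le_one_right (by positivity) (Real.exp_le_one_iff.2 (by nlinarith [sq_nonneg x]))

section
variable {E : Type*} [NormedAddCommGroup E] [InnerProductSpace ℝ E] [FiniteDimensional ℝ E]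
  [MeasurableSpace E] [BorelSpace E]

theorem stdGaussian_le_smul_volume :
    stdGaussian E ≤ ENNReal.ofReal ((√(2 * π))⁻¹ ^ finrank ℝ E) • volume := by
  set e := (stdOrthonormalBasis ℝ E).repr
  calc stdGaussian E
      = ((Measure.pi fun _ => gaussianReal 0 1).map (WithLp.toLp 2)).map e.symm := by
        rw [map_pi_eq_stdGaussian, stdGaussian_map]
    _ ≤ ((Measure.pi fun _ => (√(2 * π))⁻¹.toNNReal • volume).map (WithLp.toLp 2)).map e.symm :=
        Measure.map_mono (Measure.map_mono
          (Measure.pi_mono fun _ => gaussianReal_le_smul_volume) (by fun_prop)) (by fun_prop)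
    _ = _ := by
        rw [Measure.pi_smul_const, Measure.map_smul, Measure.map_smul, ← volume_pi,
          (PiLp.volume_preserving_toLp _).map_eq, e.symm.measurePreserving.map_eq, Fintype.card_fin,
          ENNReal.smul_def, ENNReal.coe_pow, ENNReal.ofReal_pow (by positivity)]
        rfl

theorem map_orthogonalProjectionOnto_stdGaussian (V : Submodule ℝ E) :
    (stdGaussian E).map V.orthogonalProjectionOnto = stdGaussian V := by
  refine Measure.ext_of_charFun (funext fun t => ?_)
  rw [charFun_stdGaussian, charFun_apply, integral_map (by fun_prop) (by fun_prop)]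
  simp_rw [Submodule.inner_orthogonalProjectionOnto_eq_of_mem_right]
  rw [← charFun_apply, charFun_stdGaussian, Submodule.coe_norm]

/-- In the sup norm `μH[d]` is Lebesgue measure, and the identity from the Euclidean to the sup
norm is 1-Lipschitz. -/
theorem volume_le_hausdorffMeasure_finrank : (volume : Measure E) ≤ μH[finrank ℝ E] := by
  set b := stdOrthonormalBasis ℝ E
  set f : E ≃ᵐ (Fin (finrank ℝ E) → ℝ) := b.measurableEquiv.trans (MeasurableEquiv.toLp 2 _).symm
  have hf : MeasurePreserving f :=
    (EuclideanSpace.volume_preserving_symm_measurableEquiv_toLp _).comp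
      b.measurePreserving_measurableEquiv
  have hlip : LipschitzWith 1 f := by
    have h := (PiLp.lipschitzWith_ofLp 2 (fun _ : Fin (finrank ℝ E) => ℝ)).comp b.repr.lipschitz
    rwa [one_mul] at h
  refine Measure.le_iff'.2 fun s => ?_
  calc volume s = volume (f '' s) := by rw [← hf.measure_preimage_equiv, f.preimage_image]
    _ = μH[finrank ℝ E] (f '' s) := by rw [← hausdorffMeasure_pi_real, Fintype.card_fin]
    _ ≤ μH[finrank ℝ E] s := by
        simpa using hlip.hausdorffMeasure_image_le (Nat.cast_nonneg _) s

theorem stdGaussian_starProjection_preimage_le (V : Submodule ℝ E) {S : Set E}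
    (hS : MeasurableSet S) :
    stdGaussian E (V.starProjection ⁻¹' S) ≤
      ENNReal.ofReal ((√(2 * π))⁻¹ ^ finrank ℝ V) * μH[finrank ℝ V] (S ∩ V) := by
  have hpre : V.starProjection ⁻¹' S = V.orthogonalProjectionOnto ⁻¹' (Subtype.val ⁻¹' S) := rfl
  calc stdGaussian E (V.starProjection ⁻¹' S)
      = stdGaussian V (Subtype.val ⁻¹' S) := by
        rw [hpre, ← Measure.map_apply (by fun_prop) (measurable_subtype_coe hS),
          map_orthogonalProjectionOnto_stdGaussian]
    _ ≤ ENNReal.ofReal ((√(2 * π))⁻¹ ^ finrank ℝ V) * volume (Subtype.val ⁻¹' S) :=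
        Measure.le_iff'.1 stdGaussian_le_smul_volume _
    _ ≤ ENNReal.ofReal ((√(2 * π))⁻¹ ^ finrank ℝ V) *
          μH[finrank ℝ V] (Subtype.val ⁻¹' S : Set V) := by
        gcongr
        exact volume_le_hausdorffMeasure_finrank
    _ = _ := by
        rw [isometry_subtype_coe.hausdorffMeasure_preimage (Or.inl (Nat.cast_nonneg _)),
          Subtype.range_coe]

theorem stdGaussian_preimage_comp_starProjection_le (V : Submodule ℝ E) {F : Type*}
    [EMetricSpace F] [MeasurableSpace F] [BorelSpace F] {T : E → F}
    (hT : ∀ S ⊆ (V : Set E), μH[finrank ℝ V] (T '' S) = μH[finrank ℝ V] S) {B : Set F}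
    (hB : MeasurableSet (T ⁻¹' B)) :
    stdGaussian E ((T ∘ V.starProjection) ⁻¹' B) ≤
      ENNReal.ofReal ((√(2 * π))⁻¹ ^ finrank ℝ V) * μH[finrank ℝ V] B := by
  refine (stdGaussian_starProjection_preimage_le V hB).trans ?_
  gcongr
  rw [← hT _ Set.inter_subset_right]
  exact measure_mono ((Set.image_mono Set.inter_subset_left).trans (Set.image_preimage_subset _ _))

theorem hausdorffMeasure_finrank_lt_top_of_isCompact (V : Submodule ℝ E) {T : Set E}
    (hT : IsCompact T) (hTV : T ⊆ V) : μH[finrank ℝ V] T < ⊤ := by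
  have hcomp : IsCompact (((↑) : V → E) ⁻¹' T) :=
    V.closed_of_finiteDimensional.isClosedEmbedding_subtypeVal.isCompact_preimage hT
  rw [← Set.image_preimage_eq_of_subset (f := ((↑) : V → E)) (s := T) (by rwa [Subtype.range_coe]),
    isometry_subtype_coe.hausdorffMeasure_image (Or.inl (Nat.cast_nonneg _))]
  exact hcomp.measure_lt_top

end

theorem MeasureTheory.Measure.hausdorffMeasure_smul_of_pos {E : Type*} [NormedAddCommGroup E]
    [NormedSpace ℝ E] [MeasurableSpace E] [BorelSpace E] (d : ℕ) {r : ℝ} (hr : 0 < r)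
    (s : Set E) : μH[d] (r • s) = ENNReal.ofReal (r ^ d) * μH[d] s := by
  rw [hausdorffMeasure_smul₀ (Nat.cast_nonneg _) hr.ne', NNReal.rpow_natCast, ENNReal.smul_def,
    smul_eq_mul, ENNReal.coe_pow, ← enorm_eq_nnnorm, Real.enorm_eq_ofReal hr.le,
    ENNReal.ofReal_pow hr.le]

theorem pi_gaussianReal_projection_mem_le {ι : Type*} [Fintype ι] {d : ℕ}
    {Q : EuclideanSpace ℝ ι →L[ℝ] EuclideanSpace ℝ ι} (hproj : Q ∘L Q = Q)
    (hsa : ∀ x y, (inner ℝ (Q x) y : ℝ) = inner ℝ x (Q y))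
    (hrank : finrank ℝ (LinearMap.range (Q : EuclideanSpace ℝ ι →ₗ[ℝ] EuclideanSpace ℝ ι)) = d)
    {F : Type*} [EMetricSpace F] [MeasurableSpace F] [BorelSpace F] {T : EuclideanSpace ℝ ι → F}
    (hT : ∀ S ⊆ (LinearMap.range (Q : EuclideanSpace ℝ ι →ₗ[ℝ] EuclideanSpace ℝ ι) :
      Set (EuclideanSpace ℝ ι)), μH[d] (T '' S) = μH[d] S)
    {B : Set F} (hB : MeasurableSet (T ⁻¹' B)) :
    (Measure.pi fun _ : ι => gaussianReal 0 1) {x | T (Q (WithLp.toLp 2 x)) ∈ B} ≤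
      ENNReal.ofReal ((√(2 * π))⁻¹ ^ d) * μH[d] B := by
  subst hrank
  obtain ⟨_, hQ⟩ := isStarProjection_iff_eq_starProjection_range.1
    (ContinuousLinearMap.isStarProjection_iff_isSymmetricProjection.2
      ⟨congrArg ContinuousLinearMap.toLinearMap hproj, hsa⟩)
  have hpre : {x | T (Q (WithLp.toLp 2 x)) ∈ B} = WithLp.toLp 2 ⁻¹'
      ((LinearMap.range (Q : EuclideanSpace ℝ ι →ₗ[ℝ] EuclideanSpace ℝ ι)).starProjection ⁻¹'
        (T ⁻¹' B)) := by
    rw [← hQ]; rfl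
  rw [hpre, ← Measure.map_apply (by fun_prop) (hB.preimage (by fun_prop)), map_pi_eq_stdGaussian]
  exact stdGaussian_preimage_comp_starProjection_le _ hT hB

theorem gaussian_polytope_opnorm_prob_general (n N k : ℕ)
    (K : Set (EuclideanSpace ℝ (Fin n)))
    (hKcomp : IsCompact K)
    (Q₀ Q₁ : EuclideanSpace ℝ (Fin n) →L[ℝ] EuclideanSpace ℝ (Fin n))
    (hQ₀proj : Q₀ ∘L Q₀ = Q₀)
    (hQ₀sa : ∀ x y, (inner ℝ (Q₀ x) y : ℝ) = inner ℝ x (Q₀ y))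
    (hQ₀rank : finrank ℝ (LinearMap.range (Q₀ : EuclideanSpace ℝ (Fin n) →ₗ[ℝ]
        EuclideanSpace ℝ (Fin n))) = k)
    (hQ₁rank : finrank ℝ (LinearMap.range (Q₁ : EuclideanSpace ℝ (Fin n) →ₗ[ℝ]
        EuclideanSpace ℝ (Fin n))) = k)
    (A : ℝ) (hA : 0 < A)
    (T₀ : EuclideanSpace ℝ (Fin n) →ₗ[ℝ] EuclideanSpace ℝ (Fin n))
    -- `T₀` preserves `k`-dimensional volume on the range of `Q₀`
    (hT₀vol : ∀ S : Set (EuclideanSpace ℝ (Fin n)),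
      S ⊆ (LinearMap.range (Q₀ : EuclideanSpace ℝ (Fin n) →ₗ[ℝ]
        EuclideanSpace ℝ (Fin n)) : Set (EuclideanSpace ℝ (Fin n))) →
      μH[k] (T₀ '' S) = μH[k] S)
    -- the random polytope `Z_N(ω)`
    (Z : (Fin N → (Fin n → ℝ)) → Set (EuclideanSpace ℝ (Fin n)))
    (hZ : ∀ ω, Z ω = convexHull ℝ
      (((Set.range fun j : Fin n =>
          Real.sqrt n • (EuclideanSpace.single j (1 : ℝ))) ∪
        (Set.range fun i : Fin N => (WithLp.equiv 2 (Fin n → ℝ)).symm (ω i))) ∪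
       -((Set.range fun j : Fin n =>
          Real.sqrt n • (EuclideanSpace.single j (1 : ℝ))) ∪
        (Set.range fun i : Fin N => (WithLp.equiv 2 (Fin n → ℝ)).symm (ω i))))) :
    (Measure.pi fun _ : Fin N => (Measure.pi fun _ : Fin n => gaussianReal 0 1))
        {ω : Fin N → (Fin n → ℝ) |
          T₀ '' (Q₀ '' Z ω) ⊆ A • (Q₁ '' K : Set (EuclideanSpace ℝ (Fin n)))} ≤
      ENNReal.ofReal ((A / Real.sqrt (2 * Real.pi)) ^ (k * N) *
        ((μH[k] (Q₁ '' K : Set (EuclideanSpace ℝ (Fin n)))).toReal) ^ N) := by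
  set B := A • (Q₁ '' K : Set (EuclideanSpace ℝ (Fin n)))
  set M := μH[k] (Q₁ '' K : Set (EuclideanSpace ℝ (Fin n)))
  have hM : M ≠ ⊤ := (hQ₁rank ▸ hausdorffMeasure_finrank_lt_top_of_isCompact _
    (hKcomp.image Q₁.continuous) (Set.image_subset_range _ _)).ne
  have hB : MeasurableSet (T₀ ⁻¹' B) := ((hKcomp.image Q₁.continuous).smul A).isClosed
    |>.measurableSet.preimage T₀.continuous_of_finiteDimensional.measurable
  have hsample : (Measure.pi fun _ : Fin n => gaussianReal 0 1)
      {x | T₀ (Q₀ (WithLp.toLp 2 x)) ∈ B} ≤ ENNReal.ofReal ((A / √(2 * π)) ^ k * M.toReal) := by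
    refine (pi_gaussianReal_projection_mem_le hQ₀proj hQ₀sa hQ₀rank hT₀vol hB).trans_eq ?_
    rw [Measure.hausdorffMeasure_smul_of_pos k hA, ENNReal.ofReal_mul (by positivity),
      ENNReal.ofReal_toReal hM, ← mul_assoc, ← ENNReal.ofReal_mul (by positivity), div_eq_inv_mul,
      mul_pow]
  have hevent : {ω : Fin N → (Fin n → ℝ) | T₀ '' (Q₀ '' Z ω) ⊆ B} ⊆
      Set.univ.pi fun _ => {x | T₀ (Q₀ (WithLp.toLp 2 x)) ∈ B} := fun ω hω i _ =>
    hω ⟨_, ⟨_, hZ ω ▸ subset_convexHull ℝ _ (Or.inl (Or.inr ⟨i, rfl⟩)), rfl⟩, rfl⟩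
  calc _ ≤ (Measure.pi fun _ : Fin N => (Measure.pi fun _ : Fin n => gaussianReal 0 1))
        (Set.univ.pi fun _ => {x | T₀ (Q₀ (WithLp.toLp 2 x)) ∈ B}) := measure_mono hevent
    _ = (Measure.pi fun _ : Fin n => gaussianReal 0 1) {x | T₀ (Q₀ (WithLp.toLp 2 x)) ∈ B} ^ N := by
        rw [Measure.pi_pi, Finset.prod_const, Finset.card_univ, Fintype.card_fin]
    _ ≤ ENNReal.ofReal ((A / √(2 * π)) ^ k * M.toReal) ^ N := by gcongr
    _ = _ := by rw [← ENNReal.ofReal_pow (by positivity), mul_pow, ← pow_mul]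

theorem gaussian_polytope_opnorm_prob (n N k : ℕ) (hn : 0 < n) (hN : 0 < N)
    (hk : 1 ≤ k) (hkn : k ≤ n)
    (K : Set (EuclideanSpace ℝ (Fin n)))
    (hKconv : Convex ℝ K) (hKcomp : IsCompact K) (hKint : (interior K).Nonempty)
    (hKsym : K = -K)
    (Q₀ Q₁ : EuclideanSpace ℝ (Fin n) →L[ℝ] EuclideanSpace ℝ (Fin n))
    (hQ₀proj : Q₀ ∘L Q₀ = Q₀) (hQ₁proj : Q₁ ∘L Q₁ = Q₁)
    (hQ₀sa : ∀ x y, (inner ℝ (Q₀ x) y : ℝ) = inner ℝ x (Q₀ y))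
    (hQ₁sa : ∀ x y, (inner ℝ (Q₁ x) y : ℝ) = inner ℝ x (Q₁ y))
    (hQ₀rank : finrank ℝ (LinearMap.range (Q₀ : EuclideanSpace ℝ (Fin n) →ₗ[ℝ]
        EuclideanSpace ℝ (Fin n))) = k)
    (hQ₁rank : finrank ℝ (LinearMap.range (Q₁ : EuclideanSpace ℝ (Fin n) →ₗ[ℝ]
        EuclideanSpace ℝ (Fin n))) = k)
    (A : ℝ) (hA : 0 < A)
    (T₀ : EuclideanSpace ℝ (Fin n) →ₗ[ℝ] EuclideanSpace ℝ (Fin n))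
    -- `T₀` maps the range of `Q₀` into the range of `Q₁`
    (hT₀range : ∀ x ∈ LinearMap.range (Q₀ : EuclideanSpace ℝ (Fin n) →ₗ[ℝ]
        EuclideanSpace ℝ (Fin n)),
      T₀ x ∈ LinearMap.range (Q₁ : EuclideanSpace ℝ (Fin n) →ₗ[ℝ]
        EuclideanSpace ℝ (Fin n)))
    -- `T₀` preserves `k`-dimensional volume on the range of `Q₀`
    (hT₀vol : ∀ S : Set (EuclideanSpace ℝ (Fin n)),
      S ⊆ (LinearMap.range (Q₀ : EuclideanSpace ℝ (Fin n) →ₗ[ℝ]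
        EuclideanSpace ℝ (Fin n)) : Set (EuclideanSpace ℝ (Fin n))) →
      μH[k] (T₀ '' S) = μH[k] S)
    -- the random polytope `Z_N(ω)`
    (Z : (Fin N → (Fin n → ℝ)) → Set (EuclideanSpace ℝ (Fin n)))
    (hZ : ∀ ω, Z ω = convexHull ℝ
      (((Set.range fun j : Fin n =>
          Real.sqrt n • (EuclideanSpace.single j (1 : ℝ))) ∪
        (Set.range fun i : Fin N => (WithLp.equiv 2 (Fin n → ℝ)).symm (ω i))) ∪
       -((Set.range fun j : Fin n =>
          Real.sqrt n • (EuclideanSpace.single j (1 : ℝ))) ∪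
        (Set.range fun i : Fin N => (WithLp.equiv 2 (Fin n → ℝ)).symm (ω i))))) :
    (Measure.pi fun _ : Fin N => (Measure.pi fun _ : Fin n => gaussianReal 0 1))
        {ω : Fin N → (Fin n → ℝ) |
          T₀ '' (Q₀ '' Z ω) ⊆ A • (Q₁ '' K : Set (EuclideanSpace ℝ (Fin n)))} ≤
      ENNReal.ofReal ((A / Real.sqrt (2 * Real.pi)) ^ (k * N) *
        ((μH[k] (Q₁ '' K : Set (EuclideanSpace ℝ (Fin n)))).toReal) ^ N) :=
  gaussian_polytope_opnorm_prob_general n N k K hKcomp Q₀ Q₁ hQ₀proj hQ₀sa hQ₀rank hQ₁rank A hA T₀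
    hT₀vol Z hZ
end
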